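/- If f ∈ L^1(V_{n,m}) and 1 ≤ k, m ≤ n-1 with k+m ≤ n, then (F_{m,k} f)(u) exists as an absolutely convergent integral for almost all u ∈ V_{n,k}, and ∫_{V_{n,k}} (F_{m,k} f)(u) d_*u = ∫_{V_{n,m}} f(v) d_*v. -/

import Mathlib

open MeasureTheory Matrix
open scoped Real ENNReal NNReal

noncomputable section

abbrev Mat (n m : ℕ) := Matrix (Fin n) (Fin m) ℝ

instance (n m : ℕ) : MeasurableSpace (Mat n m) :=
  inferInstanceAs (MeasurableSpace (Fin n → Fin m → ℝ))

/-- Lebesgue measure on the space of real `n × m` matrices. -/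
def matVolume (n m : ℕ) : Measure (Mat n m) :=
  (volume : Measure (Fin n → Fin m → ℝ))

/-- Symmetric matrix built from independent coordinates `(i,j)`, `i ≤ j`. -/
def symOfCoords (m : ℕ) (c : {p : Fin m × Fin m // p.1 ≤ p.2} → ℝ) :
    Matrix (Fin m) (Fin m) ℝ :=
  Matrix.of fun i j => if h : i ≤ j then c ⟨(i, j), h⟩ else c ⟨(j, i), le_of_not_ge h⟩

/-- Lebesgue measure `dr = ∏_{i ≤ j} dr_{i,j}` on symmetric `m × m` matrices. -/
def symMeasure (m : ℕ) : Measure (Matrix (Fin m) (Fin m) ℝ) :=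
  Measure.map (symOfCoords m) volume

/-- Siegel gamma function (complex argument). -/
def SiegelGamma (m : ℕ) (α : ℂ) : ℂ :=
  (Real.pi : ℂ) ^ (((m : ℂ) * ((m : ℂ) - 1)) / 4) *
    ∏ j ∈ Finset.range m, Complex.Gamma (α - (j : ℂ) / 2)

/-- Siegel gamma function (real argument). -/
def SiegelGammaR (m : ℕ) (α : ℝ) : ℝ :=
  Real.pi ^ (((m : ℝ) * ((m : ℝ) - 1)) / 4) *
    ∏ j ∈ Finset.range m, Real.Gamma (α - (j : ℝ) / 2)

/-- `i`-th leading principal minor. -/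
def pminor {m : ℕ} (s : Matrix (Fin m) (Fin m) ℝ) (i : ℕ) : ℝ :=
  (Matrix.of fun a b : Fin (min i m) =>
    s (Fin.castLE (min_le_right i m) a) (Fin.castLE (min_le_right i m) b)).det

/-- Composite power function `s^λ` of the cone of positive definite matrices. -/
def cpowCone {m : ℕ} (s : Matrix (Fin m) (Fin m) ℝ) (lam : Fin m → ℂ) : ℂ :=
  ∏ i : Fin m, ((pminor s ((i : ℕ) + 1) / pminor s (i : ℕ) : ℝ) : ℂ) ^ (lam i / 2)

/-- Gamma function of the cone, for composite parameters. -/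
def GammaOmega (m : ℕ) (lam : Fin m → ℂ) : ℂ :=
  (Real.pi : ℂ) ^ (((m : ℂ) * ((m : ℂ) - 1)) / 4) *
    ∏ j : Fin m, Complex.Gamma ((lam j - (j : ℂ)) / 2)

/-- The antidiagonal permutation matrix ω. -/
def antidiag (m : ℕ) : Matrix (Fin m) (Fin m) ℝ :=
  Matrix.of fun i j => if j = i.rev then 1 else 0

/-- `μ` is the invariant probability measure of the Stiefel manifold `V_{n,m}`,
realized as a measure on the ambient matrix space. -/
def IsStiefelMeasure (n m : ℕ) (μ : Measure (Mat n m)) : Prop :=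
  IsProbabilityMeasure μ ∧ μ {v : Mat n m | vᵀ * v = 1}ᶜ = 0 ∧
    ∀ g : Mat n n, gᵀ * g = 1 → Measure.map (fun v : Mat n m => g * v) μ = μ

/-- A family of measures realizing the Funk transform: `ν u` is the normalized
invariant measure on `{w ∈ V_{n,q} : uᵀ w = 0}`. -/
def IsFunkFamily (n p q : ℕ) (ν : Mat n p → Measure (Mat n q)) : Prop :=
  (∀ u, IsProbabilityMeasure (ν u)) ∧
  (∀ u : Mat n p, ν u {w : Mat n q | wᵀ * w = 1 ∧ uᵀ * w = 0}ᶜ = 0) ∧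
  (∀ g : Mat n n, gᵀ * g = 1 → ∀ u, Measure.map (fun w : Mat n q => g * w) (ν u) = ν (g * u))


/-- Vertical block matrix `[a; b]` of sizes `(n-m) × m` over `m × m`. -/
def vblock (n m : ℕ) (a : Matrix (Fin (n - m)) (Fin m) ℝ)
    (b : Matrix (Fin m) (Fin m) ℝ) : Mat n m :=
  Matrix.of fun i j =>
    if hi : (i : ℕ) < n - m then a ⟨(i : ℕ), hi⟩ j
    else b ⟨(i : ℕ) - (n - m), by omega⟩ j

/-- The block frame `[[a, 0], [0, I_m]]` of size `n × k`. -/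
def blockFrame (n m k : ℕ) (a : Matrix (Fin (n - m)) (Fin (k - m)) ℝ) :
    Mat n k :=
  Matrix.of fun i j =>
    if hi : (i : ℕ) < n - m then
      if hj : (j : ℕ) < k - m then a ⟨(i : ℕ), hi⟩ ⟨(j : ℕ), hj⟩ else 0
    else if (i : ℕ) - (n - m) = (j : ℕ) - (k - m) ∧ ¬ ((j : ℕ) < k - m) then 1 else 0

/-- The cosine kernel `det(vᵀ u uᵀ v)^{(α-k)/2}`. -/
def cosineKer (n m k : ℕ) (α : ℂ) (u : Mat n k) (v : Mat n m) : ℂ :=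
  (((vᵀ * u * uᵀ * v).det : ℝ) : ℂ) ^ ((α - (k : ℂ)) / 2)

/-- The sine transform `Q^α` on `V_{n,m}`. -/
def sineT (n m : ℕ) (μm : Measure (Mat n m)) (α : ℂ) (f : Mat n m → ℂ)
    (u : Mat n m) : ℂ :=
  ∫ v, f v * (((1 - vᵀ * u * uᵀ * v).det : ℝ) : ℂ) ^ ((α + (m : ℂ) - (n : ℂ)) / 2) ∂μm

/-- The sine transform `S^α_{m,k}` from `V_{n,m}` to `V_{n,k}`. -/
def sineS (n m k : ℕ) (μm : Measure (Mat n m)) (α : ℂ) (f : Mat n m → ℂ)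
    (u : Mat n k) : ℂ :=
  ∫ v, f v * (((1 - vᵀ * u * uᵀ * v).det : ℝ) : ℂ) ^ ((α + (k : ℂ) - (n : ℂ)) / 2) ∂μm

/-- The cosine transform `M^α` on `V_{n,m}`. -/
def cosM (n m : ℕ) (μm : Measure (Mat n m)) (α : ℂ) (f : Mat n m → ℂ)
    (w : Mat n m) : ℂ :=
  ∫ v, f v * (((vᵀ * w * wᵀ * v).det : ℝ) : ℂ) ^ ((α - (m : ℂ)) / 2) ∂μm

/-!
Averaging over the Haar probability measure `ρ` of `O(n)` turns every probability measure `ν`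
carried by `V_{n,q}` into the invariant one: the image of `ρ ⊗ ν` under `(g, w) ↦ g w` is
`μ_q`. Indeed, for `w ∈ V_{n,q}` the image of `ρ` under `g ↦ g w` does not depend on `w`
(transitivity of `O(n)` and right invariance of `ρ`), and the case `ν = μ_q` identifies it
with `μ_q`. Writing `μ_k` as the image of `ρ` under `g ↦ g u₀` and using
`ν (g u₀) = g_* ν u₀`, the double integral `∫ (∫ f dν u) dμ_k(u)` becomes
`∫ (∫ f (g w) dν u₀(w)) dρ(g) = ∫ f dμ_m` by Fubini.

Measurability of `u ↦ ∫ f dν u` on `V_{n,k}` comes from that of its pull-back along the orbit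
map, a continuous surjection of the Polish group `O(n)` onto `V_{n,k}` (Suslin's theorem).
-/

open Set Function MeasurableSpace

instance (n m : ℕ) : BorelSpace (Mat n m) :=
  inferInstanceAs (BorelSpace (Fin n → Fin m → ℝ))

instance (n m : ℕ) : PolishSpace (Mat n m) :=
  inferInstanceAs (PolishSpace (Fin n → Fin m → ℝ))

namespace Matrix.orthogonalGroup

variable {n : ℕ}

lemma isClosed : IsClosed (orthogonalGroup (Fin n) ℝ : Set (Matrix (Fin n) (Fin n) ℝ)) :=
  isClosed_unitary

instance : PolishSpace (orthogonalGroup (Fin n) ℝ) := isClosed.polishSpace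

instance : CompactSpace (orthogonalGroup (Fin n) ℝ) := by
  refine isCompact_iff_compactSpace.mp <|
    (isCompact_univ_pi fun _ => isCompact_univ_pi fun _ =>
      isCompact_Icc (a := (-1 : ℝ)) (b := 1)).of_isClosed_subset isClosed fun g hg i _ j _ => ?_
  simpa [abs_le] using entry_norm_bound_of_unitary hg i j

def haar (n : ℕ) : Measure (orthogonalGroup (Fin n) ℝ) := Measure.haarMeasure ⊤

instance : (haar n).IsHaarMeasure := by unfold haar; infer_instance

instance : IsProbabilityMeasure (haar n) := ⟨Measure.haarMeasure_self⟩

instance : (haar n).IsMulRightInvariant := by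
  refine ⟨fun g => ?_⟩
  have := Measure.isProbabilityMeasure_map (μ := haar n) (continuous_mul_const g).aemeasurable
  exact Measure.isHaarMeasure_eq_of_isProbabilityMeasure _ _

end Matrix.orthogonalGroup

def stiefel (n q : ℕ) : Set (Mat n q) := {v | vᵀ * v = 1}

section Stiefel

variable {n q : ℕ}

lemma mem_stiefel {v : Mat n q} : v ∈ stiefel n q ↔ vᵀ * v = 1 := Iff.rfl

lemma isClosed_stiefel : IsClosed (stiefel n q) :=
  isClosed_eq (continuous_id.matrix_transpose.matrix_mul continuous_id) continuous_const

lemma mul_mem_stiefel {g : Mat n n} (hg : g ∈ orthogonalGroup (Fin n) ℝ) {v : Mat n q}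
    (hv : v ∈ stiefel n q) : g * v ∈ stiefel n q := by
  rw [mem_orthogonalGroup_iff'] at hg
  rw [mem_stiefel, transpose_mul, Matrix.mul_assoc, ← Matrix.mul_assoc gᵀ, hg, Matrix.one_mul,
    hv]

lemma le_of_mem_stiefel {v : Mat n q} (hv : v ∈ stiefel n q) : q ≤ n := by
  have := (rank_mul_le_right vᵀ v).trans (rank_le_height v)
  rwa [mem_stiefel.mp hv, rank_one, Fintype.card_fin] at this

lemma exists_orthogonal_mul_submatrix_one_eq {v : Mat n q} (hv : v ∈ stiefel n q) (hq : q ≤ n) :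
    ∃ V ∈ orthogonalGroup (Fin n) ℝ, V * (1 : Mat n n).submatrix id (Fin.castLE hq) = v := by
  classical
  -- extend the columns of `v` to an orthonormal basis of `ℝⁿ`
  let col : Fin n → EuclideanSpace ℝ (Fin n) := fun i =>
    if h : (i : ℕ) < q then WithLp.toLp 2 (vᵀ ⟨i, h⟩) else 0
  have hcol : Orthonormal ℝ ({i : Fin n | (i : ℕ) < q}.domRestrict col) := by
    rw [orthonormal_iff_ite]
    rintro ⟨i, hi : (i : ℕ) < q⟩ ⟨j, hj : (j : ℕ) < q⟩
    have := congrFun (congrFun (mem_stiefel.mp hv) ⟨i, hi⟩) ⟨j, hj⟩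
    simpa [col, hi, hj, mul_apply, one_apply, Fin.ext_iff, PiLp.inner_apply, mul_comm] using this
  obtain ⟨b, hb⟩ := hcol.exists_orthonormalBasis_extension_of_card_eq (by simp)
  refine ⟨(EuclideanSpace.basisFun (Fin n) ℝ).toBasis.toMatrix b,
    (EuclideanSpace.basisFun (Fin n) ℝ).toMatrix_orthonormalBasis_mem_orthogonal b, ?_⟩
  ext i j
  have hj : ((Fin.castLE hq j : Fin n) : ℕ) < q := j.2
  simp [mul_apply, one_apply, Module.Basis.toMatrix_apply, hb _ hj, col]

lemma exists_orthogonal_mul_eq {v w : Mat n q} (hv : v ∈ stiefel n q) (hw : w ∈ stiefel n q) :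
    ∃ g ∈ orthogonalGroup (Fin n) ℝ, g * v = w := by
  have hq := le_of_mem_stiefel hv
  obtain ⟨V, hV, rfl⟩ := exists_orthogonal_mul_submatrix_one_eq hv hq
  obtain ⟨W, hW, rfl⟩ := exists_orthogonal_mul_submatrix_one_eq hw hq
  refine ⟨W * star V, Submonoid.mul_mem _ hW (Unitary.star_mem hV), ?_⟩
  rw [Matrix.mul_assoc, ← Matrix.mul_assoc (star V), Unitary.star_mul_self_of_mem hV,
    Matrix.one_mul]

end Stiefel

lemma aemeasurable_map_of_measurable_comp {X Z β : Type*} [MeasurableSpace X]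
    [StandardBorelSpace X] [MeasurableSpace Z] [MeasurableSpace β] {f : X → Z}
    [CountablySeparated (range f)] (hf : Measurable f) (hr : MeasurableSet (range f))
    {g : Z → β} (hg : Measurable (g ∘ f)) (μ : Measure X) : AEMeasurable g (μ.map f) := by
  have hfac : μ.map f = (μ.map (rangeFactorization f)).map Subtype.val := by
    rw [Measure.map_map measurable_subtype_coe (by fun_prop)]
    rfl
  rw [hfac, (MeasurableEmbedding.subtype_coe hr).aemeasurable_map_iff]
  exact (hf.measurable_comp_iff_restrict.mp hg).aemeasurable

section Orbit

variable {n q : ℕ}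

instance : MulAction (orthogonalGroup (Fin n) ℝ) (Mat n q) where
  smul g v := (g : Mat n n) * v
  one_smul := Matrix.one_mul
  mul_smul _ _ _ := Matrix.mul_assoc _ _ _

instance : ContinuousSMul (orthogonalGroup (Fin n) ℝ) (Mat n q) :=
  ⟨(continuous_subtype_val.comp continuous_fst).matrix_mul continuous_snd⟩

lemma measurable_orthogonal_smul :
    Measurable fun p : orthogonalGroup (Fin n) ℝ × Mat n q => p.1 • p.2 :=
  measurable_smul

lemma orbit_eq_stiefel {v : Mat n q} (hv : v ∈ stiefel n q) :
    MulAction.orbit (orthogonalGroup (Fin n) ℝ) v = stiefel n q := by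
  refine Subset.antisymm (range_subset_iff.mpr fun g => mul_mem_stiefel g.2 hv) fun w hw => ?_
  obtain ⟨g, hg, rfl⟩ := exists_orthogonal_mul_eq hv hw
  exact ⟨⟨g, hg⟩, rfl⟩

lemma map_smul_haar_eq {v w : Mat n q} (hv : v ∈ stiefel n q) (hw : w ∈ stiefel n q) :
    (orthogonalGroup.haar n).map (· • w) = (orthogonalGroup.haar n).map (· • v) := by
  obtain ⟨g, rfl⟩ : w ∈ MulAction.orbit _ v := orbit_eq_stiefel hv ▸ hw
  have : (· • g • v) = (· • v) ∘ (· * g) := by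
    ext1 h
    exact (mul_smul h g v).symm
  rw [this, ← Measure.map_map (measurable_smul_const v) (measurable_mul_const g),
    map_mul_right_eq_self]

lemma map_smul_prod_haar_eq {v : Mat n q} (hv : v ∈ stiefel n q) (ν : Measure (Mat n q))
    [IsProbabilityMeasure ν] (hν : ∀ᵐ w ∂ν, w ∈ stiefel n q) :
    ((orthogonalGroup.haar n).prod ν).map (fun p => p.1 • p.2) =
      (orthogonalGroup.haar n).map (· • v) := by
  ext A hA
  rw [Measure.map_apply measurable_orthogonal_smul hA,
    Measure.prod_apply_symm (measurable_orthogonal_smul hA)]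
  calc ∫⁻ w, orthogonalGroup.haar n ((· • w) ⁻¹' A) ∂ν
      = ∫⁻ _, (orthogonalGroup.haar n).map (· • v) A ∂ν := by
        refine lintegral_congr_ae (hν.mono fun w hw => ?_)
        rw [← map_smul_haar_eq hv hw, Measure.map_apply (measurable_smul_const w) hA]
    _ = _ := by simp

end Orbit

namespace IsStiefelMeasure

variable {n q : ℕ} {μ : Measure (Mat n q)}

lemma ae_mem_stiefel (hμ : IsStiefelMeasure n q μ) : ∀ᵐ v ∂μ, v ∈ stiefel n q := hμ.2.1

lemma nonempty_stiefel (hμ : IsStiefelMeasure n q μ) : (stiefel n q).Nonempty :=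
  have := hμ.1
  hμ.ae_mem_stiefel.exists

lemma map_smul (hμ : IsStiefelMeasure n q μ) (g : orthogonalGroup (Fin n) ℝ) :
    μ.map (g • ·) = μ :=
  hμ.2.2 g ((mem_orthogonalGroup_iff' _ _).mp g.2)

lemma map_smul_prod_haar_self (hμ : IsStiefelMeasure n q μ) :
    ((orthogonalGroup.haar n).prod μ).map (fun p => p.1 • p.2) = μ := by
  have := hμ.1
  ext A hA
  rw [Measure.map_apply measurable_orthogonal_smul hA,
    Measure.prod_apply (measurable_orthogonal_smul hA)]
  calc ∫⁻ g, μ ((g • ·) ⁻¹' A) ∂orthogonalGroup.haar n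
      = ∫⁻ _, μ A ∂orthogonalGroup.haar n := lintegral_congr fun g => by
        rw [← Measure.map_apply (measurable_const_smul g) hA, hμ.map_smul]
    _ = μ A := by simp

lemma eq_map_smul_haar (hμ : IsStiefelMeasure n q μ) {v : Mat n q} (hv : v ∈ stiefel n q) :
    μ = (orthogonalGroup.haar n).map (· • v) := by
  have := hμ.1
  rw [← map_smul_prod_haar_eq hv μ hμ.ae_mem_stiefel, hμ.map_smul_prod_haar_self]

lemma map_smul_prod_haar (hμ : IsStiefelMeasure n q μ) (ν : Measure (Mat n q))
    [IsProbabilityMeasure ν] (hν : ∀ᵐ w ∂ν, w ∈ stiefel n q) :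
    ((orthogonalGroup.haar n).prod ν).map (fun p => p.1 • p.2) = μ := by
  obtain ⟨v, hv⟩ := hμ.nonempty_stiefel
  rw [map_smul_prod_haar_eq hv ν hν, ← hμ.eq_map_smul_haar hv]

lemma lintegral_haar_lintegral (hμ : IsStiefelMeasure n q μ) (ν : Measure (Mat n q))
    [IsProbabilityMeasure ν] (hν : ∀ᵐ w ∂ν, w ∈ stiefel n q) {F : Mat n q → ℝ≥0∞}
    (hF : Measurable F) :
    ∫⁻ g, ∫⁻ w, F (g • w) ∂ν ∂orthogonalGroup.haar n = ∫⁻ v, F v ∂μ := by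
  rw [← lintegral_prod (fun p => F (p.1 • p.2))
      (hF.comp measurable_orthogonal_smul).aemeasurable,
    ← lintegral_map hF measurable_orthogonal_smul, hμ.map_smul_prod_haar ν hν]

lemma integral_haar_integral {E : Type*} [NormedAddCommGroup E] [NormedSpace ℝ E]
    (hμ : IsStiefelMeasure n q μ) (ν : Measure (Mat n q))
    [IsProbabilityMeasure ν] (hν : ∀ᵐ w ∂ν, w ∈ stiefel n q) {f : Mat n q → E}
    (hf : Integrable f μ) :
    ∫ g, ∫ w, f (g • w) ∂ν ∂orthogonalGroup.haar n = ∫ v, f v ∂μ := by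
  rw [← hμ.map_smul_prod_haar ν hν] at hf ⊢
  rw [← integral_prod (fun p => f (p.1 • p.2)) (hf.comp_measurable measurable_orthogonal_smul),
    integral_map measurable_orthogonal_smul.aemeasurable hf.1]

lemma aemeasurable_of_measurable_comp_smul {β : Type*} [MeasurableSpace β]
    (hμ : IsStiefelMeasure n q μ) {G : Mat n q → β}
    (hG : ∀ u ∈ stiefel n q, Measurable fun g : orthogonalGroup (Fin n) ℝ => G (g • u)) :
    AEMeasurable G μ := by
  obtain ⟨u, hu⟩ := hμ.nonempty_stiefel
  rw [hμ.eq_map_smul_haar hu]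
  refine aemeasurable_map_of_measurable_comp (measurable_smul_const u) ?_ (hG u hu) _
  rw [← MulAction.orbit, orbit_eq_stiefel hu]
  exact isClosed_stiefel.measurableSet

end IsStiefelMeasure

namespace IsFunkFamily

variable {n p q : ℕ} {ν : Mat n p → Measure (Mat n q)}

lemma ae_mem_stiefel (hν : IsFunkFamily n p q ν) (u : Mat n p) :
    ∀ᵐ w ∂ν u, w ∈ stiefel n q :=
  measure_mono_null (compl_subset_compl.mpr fun _ hw => hw.1) (hν.2.1 u)

lemma map_smul (hν : IsFunkFamily n p q ν) (g : orthogonalGroup (Fin n) ℝ) (u : Mat n p) :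
    (ν u).map (g • ·) = ν (g • u) :=
  hν.2.2 g ((mem_orthogonalGroup_iff' _ _).mp g.2) u

lemma lintegral_smul (hν : IsFunkFamily n p q ν) (g : orthogonalGroup (Fin n) ℝ) (u : Mat n p)
    {F : Mat n q → ℝ≥0∞} (hF : Measurable F) :
    ∫⁻ w, F w ∂ν (g • u) = ∫⁻ w, F (g • w) ∂ν u := by
  rw [← hν.map_smul, lintegral_map hF (measurable_const_smul g)]

lemma integral_smul {E : Type*} [NormedAddCommGroup E] [NormedSpace ℝ E] [MeasurableSpace E]
    [BorelSpace E] [SecondCountableTopology E] (hν : IsFunkFamily n p q ν)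
    (g : orthogonalGroup (Fin n) ℝ) (u : Mat n p) {f : Mat n q → E} (hf : Measurable f) :
    ∫ w, f w ∂ν (g • u) = ∫ w, f (g • w) ∂ν u := by
  rw [← hν.map_smul,
    integral_map (measurable_const_smul g).aemeasurable hf.aestronglyMeasurable]

lemma aemeasurable_lintegral {μ : Measure (Mat n p)} (hμ : IsStiefelMeasure n p μ)
    (hν : IsFunkFamily n p q ν) {F : Mat n q → ℝ≥0∞} (hF : Measurable F) :
    AEMeasurable (fun u => ∫⁻ w, F w ∂ν u) μ := by
  refine hμ.aemeasurable_of_measurable_comp_smul fun u _ => ?_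
  have := hν.1 u
  simp only [hν.lintegral_smul _ _ hF]
  exact (hF.comp measurable_orthogonal_smul).lintegral_prod_right'

lemma aestronglyMeasurable_integral {E : Type*} [NormedAddCommGroup E] [NormedSpace ℝ E]
    [MeasurableSpace E] [BorelSpace E] [SecondCountableTopology E] {μ : Measure (Mat n p)}
    (hμ : IsStiefelMeasure n p μ) (hν : IsFunkFamily n p q ν) {f : Mat n q → E}
    (hf : Measurable f) : AEStronglyMeasurable (fun u => ∫ w, f w ∂ν u) μ := by
  refine (hμ.aemeasurable_of_measurable_comp_smul fun u _ => ?_).aestronglyMeasurable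
  have := hν.1 u
  simp only [hν.integral_smul _ _ hf]
  exact (hf.comp measurable_orthogonal_smul).stronglyMeasurable.integral_prod_right'.measurable

variable {μp : Measure (Mat n p)} {μq : Measure (Mat n q)}

lemma lintegral_lintegral (hμp : IsStiefelMeasure n p μp) (hμq : IsStiefelMeasure n q μq)
    (hν : IsFunkFamily n p q ν) {F : Mat n q → ℝ≥0∞} (hF : Measurable F) :
    ∫⁻ u, ∫⁻ w, F w ∂ν u ∂μp = ∫⁻ w, F w ∂μq := by
  obtain ⟨u₀, hu₀⟩ := hμp.nonempty_stiefel
  have := hν.1 u₀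
  have hmeas := hν.aemeasurable_lintegral hμp hF
  rw [hμp.eq_map_smul_haar hu₀] at hmeas ⊢
  rw [lintegral_map' hmeas (measurable_smul_const u₀).aemeasurable]
  simp only [hν.lintegral_smul _ _ hF]
  exact hμq.lintegral_haar_lintegral _ (hν.ae_mem_stiefel u₀) hF

variable {E : Type*} [NormedAddCommGroup E] [MeasurableSpace E] [BorelSpace E]
  [SecondCountableTopology E]

lemma ae_integrable (hμp : IsStiefelMeasure n p μp) (hμq : IsStiefelMeasure n q μq)
    (hν : IsFunkFamily n p q ν) {f : Mat n q → E} (hf : Measurable f) (hfi : Integrable f μq) :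
    ∀ᵐ u ∂μp, Integrable f (ν u) := by
  have hfin : ∫⁻ u, ∫⁻ w, ‖f w‖ₑ ∂ν u ∂μp ≠ ∞ := by
    rw [hν.lintegral_lintegral hμp hμq hf.enorm]
    exact hfi.2.ne
  filter_upwards [ae_lt_top' (hν.aemeasurable_lintegral hμp hf.enorm) hfin] with u hu
  exact ⟨hf.aestronglyMeasurable, hu⟩

lemma integral_integral [NormedSpace ℝ E] (hμp : IsStiefelMeasure n p μp)
    (hμq : IsStiefelMeasure n q μq) (hν : IsFunkFamily n p q ν) {f : Mat n q → E}
    (hf : Measurable f) (hfi : Integrable f μq) :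
    ∫ u, ∫ w, f w ∂ν u ∂μp = ∫ w, f w ∂μq := by
  obtain ⟨u₀, hu₀⟩ := hμp.nonempty_stiefel
  have := hν.1 u₀
  have hmeas := hν.aestronglyMeasurable_integral hμp hf
  rw [hμp.eq_map_smul_haar hu₀] at hmeas ⊢
  rw [integral_map (measurable_smul_const u₀).aemeasurable hmeas]
  simp only [hν.integral_smul _ _ hf]
  exact hμq.integral_haar_integral _ (hν.ae_mem_stiefel u₀) hfi

end IsFunkFamily

theorem funk_transform_l1_general (n m k : ℕ)
    (μk : Measure (Mat n k)) (μm : Measure (Mat n m))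
    (hμk : IsStiefelMeasure n k μk) (hμm : IsStiefelMeasure n m μm)
    (ν : Mat n k → Measure (Mat n m)) (hν : IsFunkFamily n k m ν)
    (f : Mat n m → ℂ) (hfm : Measurable f) (hf : Integrable f μm) :
    (∀ᵐ u ∂μk, Integrable f (ν u)) ∧
    ∫ u, (∫ v, f v ∂ν u) ∂μk = ∫ v, f v ∂μm :=
  ⟨hν.ae_integrable hμk hμm hfm hf, hν.integral_integral hμk hμm hfm hf⟩

theorem funk_transform_l1 (n m k : ℕ) (h1k : 1 ≤ k) (hk : k ≤ n - 1)
    (h1m : 1 ≤ m) (hm : m ≤ n - 1) (hkm : k + m ≤ n)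
    (μk : Measure (Mat n k)) (μm : Measure (Mat n m))
    (hμk : IsStiefelMeasure n k μk) (hμm : IsStiefelMeasure n m μm)
    (ν : Mat n k → Measure (Mat n m)) (hν : IsFunkFamily n k m ν)
    (f : Mat n m → ℂ) (hfm : Measurable f) (hf : Integrable f μm) :
    (∀ᵐ u ∂μk, Integrable f (ν u)) ∧
    ∫ u, (∫ v, f v ∂ν u) ∂μk = ∫ v, f v ∂μm :=
  funk_transform_l1_general n m k μk μm hμk hμm ν hν f hfm hf

end
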